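/- Injectivity of the Terracini parametrization (immersion content of Proposition 3.3). Fix D ≥ 1 and dimensions n_d ≥ l_d ≥ 1. Let C ∈ ℝ^{l₁×⋯×l_D} be a tensor whose every flattening C_(d) has full row rank l_d, with vectorization c; let U_d ∈ ℝ^{n_d×l_d} have full column rank for d = 1,…,D; and let 𝒯 ⊆ ℝ^{l₁⋯l_D} be any linear subspace. Then the linear map Ψ(ċ, U̇₁, …, U̇_D) := (U₁⊗⋯⊗U_D)ċ + Σ_{d=1}^D (U₁⊗⋯⊗U_{d−1}⊗U̇_d⊗U_{d+1}⊗⋯⊗U_D)c, restricted to the subspace { (ċ, U̇₁, …, U̇_D) : ċ ∈ 𝒯, U̇_d ∈ ℝ^{n_d×l_d}, U_dᵀU̇_d = 0 for all d }, is injective. Moreover, the images of the D+1 coordinate blocks (the ċ-block and each U̇_d-block) are pairwise orthogonal subspaces of ℝ^{n₁⋯n_D}. -/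

import Mathlib

open scoped BigOperators
open Matrix

noncomputable section

/-- Iterated Kronecker product `U 1 ⊗ ⋯ ⊗ U D`, with multi-indices as rows/columns. -/
def bigKron {D : ℕ} {n l : Fin D → ℕ} (U : ∀ d, Matrix (Fin (n d)) (Fin (l d)) ℝ) :
    Matrix (∀ d, Fin (n d)) (∀ d, Fin (l d)) ℝ :=
  Matrix.of fun i j => ∏ d, U d (i d) (j d)

/-- Reassemble a full multi-index from a value `j` in slot `d` and a complementary index `i`. -/
def assemble {D : ℕ} {l : Fin D → ℕ} (d : Fin D) (j : Fin (l d))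
    (i : ∀ d' : {x : Fin D // x ≠ d}, Fin (l d'.1)) : ∀ d', Fin (l d') :=
  fun d' => if h : d' = d then Fin.cast (congrArg l h.symm) j else i ⟨d', h⟩

/-- The `d`-th flattening `C_(d)` of a tensor `c`, an `l d × ∏_{d' ≠ d} l d'` matrix. -/
def flatten {D : ℕ} {l : Fin D → ℕ} (c : (∀ d, Fin (l d)) → ℝ) (d : Fin D) :
    Matrix (Fin (l d)) (∀ d' : {x : Fin D // x ≠ d}, Fin (l d'.1)) ℝ :=
  Matrix.of fun j i => c (assemble d j i)

/-- The Terracini parametrization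
`Ψ(ċ, U̇₁, …, U̇_D) = (U₁⊗⋯⊗U_D)ċ + Σ_d (U₁⊗⋯⊗U̇_d⊗⋯⊗U_D)c`. -/
def terraciniParam {D : ℕ} {n l : Fin D → ℕ}
    (c : (∀ d, Fin (l d)) → ℝ) (U : ∀ d, Matrix (Fin (n d)) (Fin (l d)) ℝ)
    (z : ((∀ d, Fin (l d)) → ℝ) × (∀ d, Matrix (Fin (n d)) (Fin (l d)) ℝ)) :
    (∀ d, Fin (n d)) → ℝ :=
  (bigKron U).mulVec z.1 + ∑ d, (bigKron (Function.update U d (z.2 d))).mulVec c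

/-!
Since `U_dᵀ U̇_d = 0`, the Gram matrix of any two of the `D + 1` blocks of `Ψ` is a Kronecker
product with a vanishing factor, so the blocks are pairwise orthogonal and `Ψ z = 0` forces every
block to vanish. The `ċ`-block is `(U₁ ⊗ ⋯ ⊗ U_D) ċ`, and `U₁ ⊗ ⋯ ⊗ U_D` has the left inverse
`V₁ ⊗ ⋯ ⊗ V_D`. Regrouped along mode `d`, the `U̇_d`-block is `vec (K C_(d)ᵀ U̇_dᵀ)` with `K` the
Kronecker product of the remaining `U_{d'}`; cancelling the left-invertible `K` and the
right-invertible flattening `C_(d)` leaves `U̇_d = 0`. Injectivity follows by linearity of `Ψ`.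
-/

open scoped Kronecker

namespace Matrix

section Rank

variable {K : Type*} [Field K] {m n : Type*} [Fintype m] [Fintype n]

theorem exists_mul_eq_one_of_rank_eq_card_height [DecidableEq m] {A : Matrix m n K}
    (h : A.rank = Fintype.card m) : ∃ B : Matrix n m K, A * B = 1 := by
  rw [← mulVec_surjective_iff_exists_right_inverse, ← coe_mulVecLin, ← LinearMap.range_eq_top]
  apply Submodule.eq_top_of_finrank_eq
  rw [← rank, h, Module.finrank_fintype_fun_eq_card]

theorem exists_mul_eq_one_of_rank_eq_card_width [DecidableEq n] {A : Matrix m n K}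
    (h : A.rank = Fintype.card n) : ∃ B : Matrix n m K, B * A = 1 := by
  obtain ⟨B, hB⟩ :=
    exists_mul_eq_one_of_rank_eq_card_height (A := Aᵀ) (by rwa [rank_transpose])
  exact ⟨Bᵀ, by rw [← transpose_transpose (Bᵀ * A), transpose_mul, transpose_transpose, hB,
    transpose_one]⟩

end Rank

theorem mulVec_dotProduct_mulVec_eq_zero {R : Type*} [CommSemiring R] {m n p : Type*}
    [Fintype m] [Fintype n] [Fintype p] {A : Matrix m n R} {B : Matrix m p R}
    (h : Aᵀ * B = 0) (x : n → R) (y : p → R) : (A *ᵥ x) ⬝ᵥ (B *ᵥ y) = 0 := by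
  rw [dotProduct_mulVec, ← vecMul_transpose, vecMul_vecMul, h, vecMul_zero, zero_dotProduct]

theorem eq_zero_of_sum_eq_zero_of_pairwise_dotProduct {R : Type*} [Ring R] [LinearOrder R]
    [IsStrictOrderedRing R] {ι κ : Type*} [Fintype ι] [Fintype κ] {v : ι → κ → R}
    (horth : Pairwise fun i j => v i ⬝ᵥ v j = 0) (hsum : ∑ i, v i = 0) (i : ι) : v i = 0 := by
  rw [← dotProduct_self_eq_zero]
  calc v i ⬝ᵥ v i = v i ⬝ᵥ ∑ j, v j := by
        rw [dotProduct_sum, Finset.sum_eq_single i (fun j _ hji => horth hji.symm) (by simp)]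
    _ = 0 := by rw [hsum, dotProduct_zero]

variable {ι R : Type*} [Fintype ι] {m n p : ι → Type*}

def piKron [CommSemiring R] (A : ∀ i, Matrix (m i) (n i) R) :
    Matrix (∀ i, m i) (∀ i, n i) R :=
  of fun a b => ∏ i, A i (a i) (b i)

def piFlatten [DecidableEq ι] (c : (∀ i, n i) → R) (i : ι) :
    Matrix (n i) (∀ j : {j // j ≠ i}, n j) R :=
  of fun a b => c ((Equiv.piSplitAt i n).symm (a, b))

section CommSemiring

variable [CommSemiring R]

theorem transpose_piKron (A : ∀ i, Matrix (m i) (n i) R) :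
    (piKron A)ᵀ = piKron fun i => (A i)ᵀ := rfl

theorem piKron_mul [DecidableEq ι] [∀ i, Fintype (n i)] (A : ∀ i, Matrix (m i) (n i) R)
    (B : ∀ i, Matrix (n i) (p i) R) : piKron A * piKron B = piKron fun i => A i * B i := by
  ext a c
  simp only [piKron, mul_apply, of_apply, Finset.prod_univ_sum, Finset.prod_mul_distrib]
  rfl

theorem piKron_one [∀ i, DecidableEq (m i)] :
    piKron (fun i => (1 : Matrix (m i) (m i) R)) = 1 := by
  ext a b
  by_cases hab : a = b
  · subst hab
    simp [piKron]
  · obtain ⟨i, hi⟩ := Function.ne_iff.mp hab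
    rw [one_apply_ne hab]
    exact Finset.prod_eq_zero (Finset.mem_univ i) (one_apply_ne hi)

theorem piKron_eq_zero {A : ∀ i, Matrix (m i) (n i) R} (i : ι) (h : A i = 0) :
    piKron A = 0 := by
  ext a b
  exact Finset.prod_eq_zero (Finset.mem_univ i) (by simp [h])

theorem piKron_mul_piKron_eq_one [DecidableEq ι] [∀ i, Fintype (m i)]
    [∀ i, DecidableEq (n i)] {V : ∀ i, Matrix (n i) (m i) R} {U : ∀ i, Matrix (m i) (n i) R}
    (h : ∀ i, V i * U i = 1) :
    piKron V * piKron U = 1 := by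
  rw [piKron_mul, funext h, piKron_one]

theorem transpose_piKron_mul_piKron_eq_zero [DecidableEq ι] [∀ i, Fintype (m i)]
    {A : ∀ i, Matrix (m i) (n i) R} {B : ∀ i, Matrix (m i) (p i) R} (i : ι)
    (h : (A i)ᵀ * B i = 0) : (piKron A)ᵀ * piKron B = 0 := by
  rw [transpose_piKron, piKron_mul]
  exact piKron_eq_zero i h

theorem submatrix_piSplitAt_piKron [DecidableEq ι] (A : ∀ i, Matrix (m i) (n i) R) (i : ι) :
    (piKron A).submatrix (Equiv.piSplitAt i m).symm (Equiv.piSplitAt i n).symm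
      = A i ⊗ₖ piKron fun j : {j // j ≠ i} => A j := by
  ext ⟨a, a'⟩ ⟨b, b'⟩
  simp only [submatrix_apply, piKron, of_apply, kronecker_apply,
    Fintype.prod_eq_mul_prod_subtype_ne _ i, Equiv.piSplitAt_symm_apply, dif_pos]
  congr 1
  exact Finset.prod_congr rfl fun j _ => by rw [dif_neg j.2, dif_neg j.2]

theorem piKron_update_apply [DecidableEq ι] (A : ∀ i, Matrix (m i) (n i) R) (i : ι)
    (W : Matrix (m i) (n i) R) (a : ∀ i, m i) (b : ∀ i, n i) :
    piKron (Function.update A i W) a b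
      = W (a i) (b i) * ∏ j : {j // j ≠ i}, A j (a j) (b j) := by
  simp only [piKron, of_apply, Fintype.prod_eq_mul_prod_subtype_ne _ i, Function.update_self]
  congr 1
  exact Finset.prod_congr rfl fun j _ => by rw [Function.update_of_ne j.2]

-- `(B ⊗ₖ A) *ᵥ vec X = vec (A * X * Bᵀ)`, once the indices are regrouped along mode `i`.
theorem piKron_update_mulVec_comp_piSplitAt_symm [DecidableEq ι] [∀ i, Fintype (n i)]
    (U : ∀ i, Matrix (m i) (n i) R) (i : ι) (W : Matrix (m i) (n i) R) (c : (∀ i, n i) → R) :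
    (piKron (Function.update U i W) *ᵥ c) ∘ (Equiv.piSplitAt i m).symm
      = vec ((piKron fun j : {j // j ≠ i} => U j) * (piFlatten c i)ᵀ * Wᵀ) := by
  have hc_eq : c = (c ∘ (Equiv.piSplitAt i n).symm) ∘ (Equiv.piSplitAt i n).symm.symm := by
    rw [Function.comp_assoc, Equiv.self_comp_symm, Function.comp_id]
  rw [hc_eq, ← submatrix_mulVec_equiv, submatrix_piSplitAt_piKron, Function.update_self,
    ← kronecker_mulVec_vec]
  congr 2
  · exact congrArg piKron (funext fun j => Function.update_of_ne j.2 _ _)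
  · ext
    simp

theorem piKron_mulVec_dotProduct_piKron_update_mulVec [DecidableEq ι]
    [∀ i, Fintype (m i)] [∀ i, Fintype (n i)] {U : ∀ i, Matrix (m i) (n i) R} {i : ι}
    {W : Matrix (m i) (n i) R} (hW : (U i)ᵀ * W = 0) (x y : (∀ i, n i) → R) :
    (piKron U *ᵥ x) ⬝ᵥ (piKron (Function.update U i W) *ᵥ y) = 0 :=
  mulVec_dotProduct_mulVec_eq_zero
    (transpose_piKron_mul_piKron_eq_zero i (by rwa [Function.update_self])) x y

theorem piKron_update_mulVec_dotProduct_piKron_update_mulVec [DecidableEq ι]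
    [∀ i, Fintype (m i)] [∀ i, Fintype (n i)] {U : ∀ i, Matrix (m i) (n i) R} {i j : ι}
    (hij : i ≠ j) {W : Matrix (m i) (n i) R} (hW : (U i)ᵀ * W = 0) (W' : Matrix (m j) (n j) R)
    (x y : (∀ i, n i) → R) :
    (piKron (Function.update U i W) *ᵥ x) ⬝ᵥ (piKron (Function.update U j W') *ᵥ y) = 0 := by
  refine mulVec_dotProduct_mulVec_eq_zero (transpose_piKron_mul_piKron_eq_zero i ?_) x y
  rw [Function.update_self, Function.update_of_ne hij, ← transpose_transpose (U i),
    ← transpose_mul, hW, transpose_zero]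

end CommSemiring

section CommRing

variable [CommRing R]

theorem piKron_update_sub [DecidableEq ι] (A : ∀ i, Matrix (m i) (n i) R) (i : ι)
    (W W' : Matrix (m i) (n i) R) :
    piKron (Function.update A i (W - W'))
      = piKron (Function.update A i W) - piKron (Function.update A i W') := by
  ext a b
  simp only [sub_apply, piKron_update_apply, sub_mul]

theorem eq_zero_of_piKron_update_mulVec_eq_zero [DecidableEq ι]
    [∀ i, Fintype (m i)] [∀ i, Fintype (n i)] [∀ i, DecidableEq (n i)]
    {U : ∀ i, Matrix (m i) (n i) R} {V : ∀ i, Matrix (n i) (m i) R} (hV : ∀ i, V i * U i = 1)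
    {c : (∀ i, n i) → R} {i : ι} {C' : Matrix (∀ j : {j // j ≠ i}, n j) (n i) R}
    (hC : piFlatten c i * C' = 1) {W : Matrix (m i) (n i) R}
    (h : piKron (Function.update U i W) *ᵥ c = 0) : W = 0 := by
  have hVU : (piKron fun j : {j // j ≠ i} => V j) * (piKron fun j : {j // j ≠ i} => U j) = 1 :=
    piKron_mul_piKron_eq_one fun j => hV j
  have hUCW : (piKron fun j : {j // j ≠ i} => U j) * (piFlatten c i)ᵀ * Wᵀ = 0 := by
    rw [← vec_inj, ← piKron_update_mulVec_comp_piSplitAt_symm, h, vec_zero]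
    rfl
  have hWC : W * piFlatten c i = 0 := by
    rw [← transpose_eq_zero, transpose_mul, ← Matrix.one_mul (piFlatten c i)ᵀ, ← hVU,
      Matrix.mul_assoc, Matrix.mul_assoc, ← Matrix.mul_assoc _ _ Wᵀ, hUCW, Matrix.mul_zero]
  calc W = W * piFlatten c i * C' := by rw [Matrix.mul_assoc, hC, Matrix.mul_one]
    _ = 0 := by rw [hWC, Matrix.zero_mul]

end CommRing

end Matrix

theorem bigKron_eq_piKron {D : ℕ} {n l : Fin D → ℕ}
    (U : ∀ d, Matrix (Fin (n d)) (Fin (l d)) ℝ) : bigKron U = piKron U := rfl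

theorem flatten_eq_piFlatten {D : ℕ} {l : Fin D → ℕ} (c : (∀ d, Fin (l d)) → ℝ) (d : Fin D) :
    flatten c d = piFlatten c d := by
  ext j b
  refine congrArg c (funext fun d' => ?_)
  simp only [assemble, Equiv.piSplitAt_symm_apply]
  split
  · subst d'
    rfl
  · rfl

-- `none` indexes the `ċ`-block and `some d` the `U̇_d`-block of `Ψ`.
def terraciniBlock {D : ℕ} {n l : Fin D → ℕ} (c : (∀ d, Fin (l d)) → ℝ)
    (U : ∀ d, Matrix (Fin (n d)) (Fin (l d)) ℝ)
    (z : ((∀ d, Fin (l d)) → ℝ) × (∀ d, Matrix (Fin (n d)) (Fin (l d)) ℝ)) :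
    Option (Fin D) → (∀ d, Fin (n d)) → ℝ
  | none => piKron U *ᵥ z.1
  | some d => piKron (Function.update U d (z.2 d)) *ᵥ c

section Terracini

variable {D : ℕ} {n l : Fin D → ℕ} (c : (∀ d, Fin (l d)) → ℝ)
  (U : ∀ d, Matrix (Fin (n d)) (Fin (l d)) ℝ)

theorem terraciniParam_eq_sum_terraciniBlock
    (z : ((∀ d, Fin (l d)) → ℝ) × (∀ d, Matrix (Fin (n d)) (Fin (l d)) ℝ)) :
    terraciniParam c U z = ∑ o, terraciniBlock c U z o := by
  rw [Fintype.sum_option]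
  rfl

theorem terraciniParam_sub
    (z z' : ((∀ d, Fin (l d)) → ℝ) × (∀ d, Matrix (Fin (n d)) (Fin (l d)) ℝ)) :
    terraciniParam c U (z - z') = terraciniParam c U z - terraciniParam c U z' := by
  simp only [terraciniParam, Prod.fst_sub, Prod.snd_sub, Pi.sub_apply, mulVec_sub,
    bigKron_eq_piKron, piKron_update_sub, sub_mulVec, Finset.sum_sub_distrib]
  abel

theorem pairwise_dotProduct_terraciniBlock
    {z : ((∀ d, Fin (l d)) → ℝ) × (∀ d, Matrix (Fin (n d)) (Fin (l d)) ℝ)}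
    (hz : ∀ d, (U d)ᵀ * z.2 d = 0) :
    Pairwise fun o o' => terraciniBlock c U z o ⬝ᵥ terraciniBlock c U z o' = 0 := by
  rintro (_ | d) (_ | d') hne
  · exact absurd rfl hne
  · exact piKron_mulVec_dotProduct_piKron_update_mulVec (hz d') _ _
  · rw [dotProduct_comm]
    exact piKron_mulVec_dotProduct_piKron_update_mulVec (hz d) _ _
  · exact piKron_update_mulVec_dotProduct_piKron_update_mulVec (fun h => hne (congrArg some h))
      (hz d) _ _ _

theorem eq_zero_of_terraciniParam_eq_zero (hc : ∀ d, (flatten c d).rank = l d)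
    (hU : ∀ d, (U d).rank = l d)
    {z : ((∀ d, Fin (l d)) → ℝ) × (∀ d, Matrix (Fin (n d)) (Fin (l d)) ℝ)}
    (hz : ∀ d, (U d)ᵀ * z.2 d = 0) (h : terraciniParam c U z = 0) : z = 0 := by
  choose V hV using fun d =>
    exists_mul_eq_one_of_rank_eq_card_width (A := U d) (by rw [hU d, Fintype.card_fin])
  have hblock := eq_zero_of_sum_eq_zero_of_pairwise_dotProduct
    (pairwise_dotProduct_terraciniBlock c U hz)
    (by rw [← terraciniParam_eq_sum_terraciniBlock, h])
  refine Prod.ext ?_ (funext fun d => ?_)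
  · calc z.1 = piKron V *ᵥ (piKron U *ᵥ z.1) := by
          rw [mulVec_mulVec, piKron_mul_piKron_eq_one hV, one_mulVec]
      _ = 0 := by rw [show piKron U *ᵥ z.1 = 0 from hblock none, mulVec_zero]
  · obtain ⟨C', hC'⟩ :=
      exists_mul_eq_one_of_rank_eq_card_height (by rw [hc d, Fintype.card_fin])
    exact eq_zero_of_piKron_update_mulVec_eq_zero hV
      (by rwa [← flatten_eq_piFlatten]) (hblock (some d))

end Terracini

theorem terracini_param_injective_general
    {D : ℕ} (n l : Fin D → ℕ)
    (c : (∀ d, Fin (l d)) → ℝ)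
    (hc : ∀ d, (flatten c d).rank = l d)
    (U : ∀ d, Matrix (Fin (n d)) (Fin (l d)) ℝ)
    (hU : ∀ d, (U d).rank = l d)
    (T : Submodule ℝ ((∀ d, Fin (l d)) → ℝ)) :
    -- injectivity on the constrained subspace
    (∀ z z' : ((∀ d, Fin (l d)) → ℝ) × (∀ d, Matrix (Fin (n d)) (Fin (l d)) ℝ),
      z.1 ∈ T → (∀ d, (U d)ᵀ * z.2 d = 0) →
      z'.1 ∈ T → (∀ d, (U d)ᵀ * z'.2 d = 0) →
      terraciniParam c U z = terraciniParam c U z' → z = z') ∧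
    -- the `ċ`-block is orthogonal to every `U̇_d`-block
    (∀ (cdot : (∀ d, Fin (l d)) → ℝ), cdot ∈ T →
      ∀ (d : Fin D) (Udot : Matrix (Fin (n d)) (Fin (l d)) ℝ), (U d)ᵀ * Udot = 0 →
        ∑ a, (bigKron U).mulVec cdot a
            * (bigKron (Function.update U d Udot)).mulVec c a = 0) ∧
    -- distinct `U̇_d`-blocks are pairwise orthogonal
    (∀ (d d' : Fin D), d ≠ d' →
      ∀ (Udot : Matrix (Fin (n d)) (Fin (l d)) ℝ), (U d)ᵀ * Udot = 0 →
      ∀ (Udot' : Matrix (Fin (n d')) (Fin (l d')) ℝ), (U d')ᵀ * Udot' = 0 →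
        ∑ a, (bigKron (Function.update U d Udot)).mulVec c a
            * (bigKron (Function.update U d' Udot')).mulVec c a = 0) := by
  refine ⟨fun z z' _ hz _ hz' hzz' => ?_,
    fun x _ d W hW => piKron_mulVec_dotProduct_piKron_update_mulVec hW x c,
    fun d d' hdd' W hW W' _ =>
      piKron_update_mulVec_dotProduct_piKron_update_mulVec hdd' hW W' c c⟩
  rw [← sub_eq_zero]
  refine eq_zero_of_terraciniParam_eq_zero c U hc hU (fun d => ?_)
    (by rw [terraciniParam_sub, hzz', sub_self])
  rw [Prod.snd_sub, Pi.sub_apply, Matrix.mul_sub, hz d, hz' d, sub_zero]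

/-- **Immersion content of Proposition 3.3.** If every flattening of `C` has full row
rank and every `U_d` has full column rank, then `Ψ` is injective on the subspace
`{(ċ, U̇₁, …, U̇_D) : ċ ∈ 𝒯, U_dᵀU̇_d = 0}`, and the images of the `D+1` coordinate
blocks are pairwise orthogonal. -/
theorem terracini_param_injective
    {D : ℕ} (hD : 1 ≤ D) (n l : Fin D → ℕ) (hnl : ∀ d, l d ≤ n d)
    (c : (∀ d, Fin (l d)) → ℝ)
    (hc : ∀ d, (flatten c d).rank = l d)
    (U : ∀ d, Matrix (Fin (n d)) (Fin (l d)) ℝ)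
    (hU : ∀ d, (U d).rank = l d)
    (T : Submodule ℝ ((∀ d, Fin (l d)) → ℝ)) :
    -- injectivity on the constrained subspace
    (∀ z z' : ((∀ d, Fin (l d)) → ℝ) × (∀ d, Matrix (Fin (n d)) (Fin (l d)) ℝ),
      z.1 ∈ T → (∀ d, (U d)ᵀ * z.2 d = 0) →
      z'.1 ∈ T → (∀ d, (U d)ᵀ * z'.2 d = 0) →
      terraciniParam c U z = terraciniParam c U z' → z = z') ∧
    -- the `ċ`-block is orthogonal to every `U̇_d`-block
    (∀ (cdot : (∀ d, Fin (l d)) → ℝ), cdot ∈ T →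
      ∀ (d : Fin D) (Udot : Matrix (Fin (n d)) (Fin (l d)) ℝ), (U d)ᵀ * Udot = 0 →
        ∑ a, (bigKron U).mulVec cdot a
            * (bigKron (Function.update U d Udot)).mulVec c a = 0) ∧
    -- distinct `U̇_d`-blocks are pairwise orthogonal
    (∀ (d d' : Fin D), d ≠ d' →
      ∀ (Udot : Matrix (Fin (n d)) (Fin (l d)) ℝ), (U d)ᵀ * Udot = 0 →
      ∀ (Udot' : Matrix (Fin (n d')) (Fin (l d')) ℝ), (U d')ᵀ * Udot' = 0 →
        ∑ a, (bigKron (Function.update U d Udot)).mulVec c a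
            * (bigKron (Function.update U d' Udot')).mulVec c a = 0) :=
  terracini_param_injective_general n l c hc U hU T

end
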